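/- arXiv:1612.09451 — 3 statements merged into one kernel-verified Lean document; each statement's English description precedes it below -/
import Mathlib

section
/- Let F be a complex Banach space, let U ⊆ ℂⁿ be open, and let s : U → F be holomorphic (i.e. DifferentiableOn ℂ). Let u ∈ U, v ∈ ℂⁿ and ρ > 0 be such that the closed disk {u + t·v : t ∈ ℂ, |t| ≤ ρ} is contained in U. Then e^{‖u‖²/2}·‖s(u)‖² ≤ (1/(2π))·∫₀^{2π} e^{‖u + ρe^{iθ}v‖²/2}·‖s(u + ρe^{iθ}v)‖² dθ. (Equivalently: the function u ↦ e^{‖u‖²/2}‖s(u)‖², which is the squared norm of s in the Hermitian metric obtained by multiplying the standard fibre metric by e^{‖u‖²/2}, satisfies the sub-mean value inequality along every complex line, i.e. it is plurisubharmonic.) -/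
/-!
On the line `t ↦ u + t • v` the weight factors as
`e^{‖u + t v‖²/2} = |e^{‖u‖²/4 + ⟪u, v⟫ t / 2}|² · e^{|t|²‖v‖²/2}`, with a holomorphic first factor.
So `g t = e^{‖u‖²/4 + ⟪u, v⟫ t / 2} • s (u + t • v)` is holomorphic, `‖g 0‖²` is the weighted
squared norm of `s` at `u`, and `‖g t‖²` is at most the weighted squared norm at `u + t • v`.
It remains to see that `‖g‖²` has the sub-mean value property, which follows from the mean value
property of `(φ ∘ g)²` for a functional `φ` of norm at most one with `φ (g 0) = ‖g 0‖`.
-/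

open Metric Complex Real

theorem norm_circleAverage_le {E : Type*} [NormedAddCommGroup E] [NormedSpace ℝ E]
    (f : ℂ → E) (c : ℂ) (R : ℝ) :
    ‖circleAverage f c R‖ ≤ circleAverage (fun z ↦ ‖f z‖) c R := by
  rw [circleAverage_def, circleAverage_def, norm_smul, smul_eq_mul,
    Real.norm_of_nonneg (by positivity)]
  gcongr
  exact intervalIntegral.norm_integral_le_integral_norm Real.two_pi_pos.le

theorem norm_pow_le_circleAverage_norm_pow {F : Type*} [NormedAddCommGroup F] [NormedSpace ℂ F]
    [CompleteSpace F] {g : ℂ → F} {c : ℂ} {R : ℝ}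
    (hg : DifferentiableOn ℂ g (closedBall c |R|)) (n : ℕ) :
    ‖g c‖ ^ n ≤ circleAverage (fun z ↦ ‖g z‖ ^ n) c R := by
  obtain ⟨φ, hφ, hφc⟩ := exists_dual_vector'' ℂ (g c)
  set h : ℂ → ℂ := fun z ↦ φ (g z) ^ n
  have hh : DifferentiableOn ℂ h (closedBall c |R|) :=
    (φ.differentiable.comp_differentiableOn hg).pow n
  have hh_le : ∀ z, ‖h z‖ ≤ ‖g z‖ ^ n := fun z ↦ by
    rw [norm_pow]
    gcongr
    simpa using φ.le_of_opNorm_le hφ (g z)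
  calc ‖g c‖ ^ n = ‖h c‖ := by simp [h, hφc]
    _ = ‖circleAverage h c R‖ := by rw [(hh.diffContOnCl_ball le_rfl).circleAverage]
    _ ≤ circleAverage (fun z ↦ ‖h z‖) c R := norm_circleAverage_le h c R
    _ ≤ circleAverage (fun z ↦ ‖g z‖ ^ n) c R :=
      circleAverage_mono (hh.continuousOn.mono sphere_subset_closedBall).norm.circleIntegrable'
        ((hg.continuousOn.mono sphere_subset_closedBall).norm.pow n).circleIntegrable'
        fun z _ ↦ hh_le z

section GaussianFrame

variable {E : Type*} [NormedAddCommGroup E] [InnerProductSpace ℂ E]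

noncomputable def gaussianFrame (u v : E) (t : ℂ) : ℂ :=
  cexp (((‖u‖ ^ 2 / 4 : ℝ) : ℂ) + inner ℂ u v * t / 2)

theorem differentiable_gaussianFrame (u v : E) : Differentiable ℂ (gaussianFrame u v) := by
  unfold gaussianFrame
  fun_prop

theorem norm_add_smul_sq (u v : E) (t : ℂ) :
    ‖u + t • v‖ ^ 2 = ‖u‖ ^ 2 + 2 * (inner ℂ u v * t).re + ‖t‖ ^ 2 * ‖v‖ ^ 2 := by
  rw [@norm_add_sq ℂ, inner_smul_right, norm_smul, mul_pow, mul_comm t, RCLike.re_to_complex]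

theorem norm_gaussianFrame_sq (u v : E) (t : ℂ) :
    ‖gaussianFrame u v t‖ ^ 2 = Real.exp ((‖u + t • v‖ ^ 2 - ‖t‖ ^ 2 * ‖v‖ ^ 2) / 2) := by
  rw [gaussianFrame, Complex.norm_exp, sq, ← Real.exp_add, norm_add_smul_sq]
  congr 1
  simp only [add_re, ofReal_re, div_ofNat_re]
  ring

theorem norm_gaussianFrame_smul_sq_le {F : Type*} [NormedAddCommGroup F] [NormedSpace ℂ F]
    (u v : E) (t : ℂ) (x : F) :
    ‖gaussianFrame u v t • x‖ ^ 2 ≤ Real.exp (‖u + t • v‖ ^ 2 / 2) * ‖x‖ ^ 2 := by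
  rw [norm_smul, mul_pow, norm_gaussianFrame_sq]
  gcongr
  exact sub_le_self _ (by positivity)

theorem norm_gaussianFrame_zero_smul_sq {F : Type*} [NormedAddCommGroup F] [NormedSpace ℂ F]
    (u v : E) (x : F) :
    ‖gaussianFrame u v 0 • x‖ ^ 2 = Real.exp (‖u‖ ^ 2 / 2) * ‖x‖ ^ 2 := by
  rw [norm_smul, mul_pow, norm_gaussianFrame_sq]
  simp

end GaussianFrame

theorem stmt_5_general (n : ℕ) {F : Type*} [NormedAddCommGroup F] [NormedSpace ℂ F] [CompleteSpace F]
    (U : Set (EuclideanSpace ℂ (Fin n)))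
    (s : EuclideanSpace ℂ (Fin n) → F) (hs : DifferentiableOn ℂ s U)
    (u v : EuclideanSpace ℂ (Fin n)) (ρ : ℝ) (hρ : 0 < ρ)
    (hdisk : ∀ t : ℂ, ‖t‖ ≤ ρ → u + t • v ∈ U) :
    Real.exp (‖u‖ ^ 2 / 2) * ‖s u‖ ^ 2 ≤
      (1 / (2 * Real.pi)) *
        ∫ θ in (0:ℝ)..(2 * Real.pi),
          Real.exp (‖u + ((ρ : ℂ) * Complex.exp (θ * Complex.I)) • v‖ ^ 2 / 2) *
            ‖s (u + ((ρ : ℂ) * Complex.exp (θ * Complex.I)) • v)‖ ^ 2 := by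
  have hline : Set.MapsTo (fun t : ℂ ↦ u + t • v) (closedBall 0 |ρ|) U := fun t ht ↦
    hdisk t (by simpa [abs_of_pos hρ] using ht)
  have hs_line : DifferentiableOn ℂ (fun t : ℂ ↦ s (u + t • v)) (closedBall 0 |ρ|) :=
    hs.comp (by fun_prop) hline
  have hg : DifferentiableOn ℂ (fun t ↦ gaussianFrame u v t • s (u + t • v)) (closedBall 0 |ρ|) :=
    (differentiable_gaussianFrame u v).differentiableOn.smul hs_line
  have hs_circle := hs_line.continuousOn.mono sphere_subset_closedBall
  calc Real.exp (‖u‖ ^ 2 / 2) * ‖s u‖ ^ 2 = ‖gaussianFrame u v 0 • s (u + (0 : ℂ) • v)‖ ^ 2 := by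
        rw [norm_gaussianFrame_zero_smul_sq, zero_smul, add_zero]
    _ ≤ circleAverage (fun t ↦ ‖gaussianFrame u v t • s (u + t • v)‖ ^ 2) 0 ρ :=
        norm_pow_le_circleAverage_norm_pow hg 2
    _ ≤ circleAverage (fun t ↦ Real.exp (‖u + t • v‖ ^ 2 / 2) * ‖s (u + t • v)‖ ^ 2) 0 ρ :=
        circleAverage_mono
          ((hg.continuousOn.mono sphere_subset_closedBall).norm.pow 2).circleIntegrable'
          ((by fun_prop : Continuous fun t : ℂ ↦ Real.exp (‖u + t • v‖ ^ 2 / 2)).continuousOn.mul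
            (hs_circle.norm.pow 2)).circleIntegrable'
          fun t _ ↦ norm_gaussianFrame_smul_sq_le u v t _
    _ = _ := by simp [circleAverage_def, circleMap_zero]

theorem stmt_5 (n : ℕ) {F : Type*} [NormedAddCommGroup F] [NormedSpace ℂ F] [CompleteSpace F]
    (U : Set (EuclideanSpace ℂ (Fin n))) (hU : IsOpen U)
    (s : EuclideanSpace ℂ (Fin n) → F) (hs : DifferentiableOn ℂ s U)
    (u v : EuclideanSpace ℂ (Fin n)) (ρ : ℝ) (hρ : 0 < ρ)
    (hdisk : ∀ t : ℂ, ‖t‖ ≤ ρ → u + t • v ∈ U) :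
    Real.exp (‖u‖ ^ 2 / 2) * ‖s u‖ ^ 2 ≤
      (1 / (2 * Real.pi)) *
        ∫ θ in (0:ℝ)..(2 * Real.pi),
          Real.exp (‖u + ((ρ : ℂ) * Complex.exp (θ * Complex.I)) • v‖ ^ 2 / 2) *
            ‖s (u + ((ρ : ℂ) * Complex.exp (θ * Complex.I)) • v)‖ ^ 2 :=
  stmt_5_general n U s hs u v ρ hρ hdisk
end

section
/- Let n ≥ 2, let 0 < r < 1, let F be a complex Banach space, let U ⊆ ℂⁿ be an open neighborhood of the closed annulus Ω_{r,1}, and let s : U → F be holomorphic (DifferentiableOn ℂ). Then sup_{u ∈ Ω_{r,1}} e^{‖u‖²/4}·‖s(u)‖ = sup_{u ∈ S} e^{‖u‖²/4}·‖s(u)‖, i.e. the norm of s with respect to the Hermitian metric obtained by multiplying the standard fibre metric by e^{‖u‖²/2} attains its supremum over the annulus on the outer unit sphere. -/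
/-!
Since `n ≥ 2`, every `u` with `‖u‖ ≤ 1` has an orthogonal `w` with `‖u‖² + ‖w‖² = 1`, and the
holomorphic disk `z ↦ u + z • w`, `‖z‖ ≤ 1`, lies in the shell `‖u‖ ≤ ‖v‖ ≤ 1` with boundary
circle on the unit sphere. The maximum modulus principle on this disk gives a point `v` of the
sphere with `‖s u‖ ≤ ‖s v‖`, and the radial weight `e^{‖·‖²/4}` is largest on the sphere, so every
value of the weighted norm on the annulus is dominated by one on the sphere.
-/

open Metric
open scoped InnerProductSpace

section InnerProductSpace

variable {𝕜 E : Type*} [RCLike 𝕜] [NormedAddCommGroup E] [InnerProductSpace 𝕜 E]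

theorem exists_inner_eq_zero_and_norm_eq (hE : 2 ≤ Module.finrank 𝕜 E) (u : E) {c : ℝ}
    (hc : 0 ≤ c) : ∃ w : E, ⟪u, w⟫_𝕜 = 0 ∧ ‖w‖ = c := by
  have hspan : (𝕜 ∙ u) ≠ ⊤ := by
    intro h
    have := finrank_span_le_card (R := 𝕜) ({u} : Set E)
    rw [h, finrank_top, Set.toFinset_singleton, Finset.card_singleton] at this
    omega
  obtain ⟨w₀, hw₀, hw₀_ne⟩ := Submodule.exists_mem_ne_zero_of_ne_bot
    (mt Submodule.orthogonal_eq_bot_iff.mp hspan)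
  refine ⟨((c / ‖w₀‖ : ℝ) : 𝕜) • w₀, ?_, ?_⟩
  · rw [inner_smul_right, Submodule.inner_right_of_mem_orthogonal
      (Submodule.mem_span_singleton_self u) hw₀, mul_zero]
  · rw [norm_smul, RCLike.norm_ofReal, abs_div, abs_norm, abs_of_nonneg hc,
      div_mul_cancel₀ _ (norm_ne_zero_iff.mpr hw₀_ne)]

theorem norm_add_smul_sq_of_inner_eq_zero {u w : E} (h : ⟪u, w⟫_𝕜 = 0) (z : 𝕜) :
    ‖u + z • w‖ ^ 2 = ‖u‖ ^ 2 + ‖z‖ ^ 2 * ‖w‖ ^ 2 := by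
  simp only [sq]
  rw [norm_add_sq_eq_norm_sq_add_norm_sq_of_inner_eq_zero _ _
    (by rw [inner_smul_right, h, mul_zero]), norm_smul]
  ring

end InnerProductSpace

theorem Complex.exists_norm_eq_one_norm_le_norm_add_smul {E F : Type*}
    [NormedAddCommGroup E] [NormedSpace ℂ E] [NormedAddCommGroup F] [NormedSpace ℂ F]
    {s : E → F} {K : Set E} (hs : DifferentiableOn ℂ s K) {u w : E}
    (hK : ∀ z : ℂ, ‖z‖ ≤ 1 → u + z • w ∈ K) :
    ∃ z : ℂ, ‖z‖ = 1 ∧ ‖s u‖ ≤ ‖s (u + z • w)‖ := by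
  have hdisk : DiffContOnCl ℂ (fun z : ℂ => s (u + z • w)) (ball 0 1) := by
    refine DifferentiableOn.diffContOnCl ?_
    rw [closure_ball 0 one_ne_zero]
    refine hs.comp ((differentiable_id.smul_const w).const_add u).differentiableOn fun z hz => ?_
    exact hK z (mem_closedBall_zero_iff.mp hz)
  obtain ⟨z, hz, hmax⟩ :=
    Complex.exists_mem_frontier_isMaxOn_norm isBounded_ball ⟨0, mem_ball_self one_pos⟩ hdisk
  rw [frontier_ball 0 one_ne_zero, mem_sphere_zero_iff_norm] at hz
  rw [closure_ball 0 one_ne_zero] at hmax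
  refine ⟨z, hz, ?_⟩
  simpa using hmax (mem_closedBall_self zero_le_one)

theorem exists_norm_eq_one_and_norm_le_of_differentiableOn {E F : Type*}
    [NormedAddCommGroup E] [InnerProductSpace ℂ E] [NormedAddCommGroup F] [NormedSpace ℂ F]
    (hE : 2 ≤ Module.finrank ℂ E) {s : E → F} {u : E} (hu : ‖u‖ ≤ 1)
    (hs : DifferentiableOn ℂ s {v | ‖u‖ ≤ ‖v‖ ∧ ‖v‖ ≤ 1}) :
    ∃ v : E, ‖v‖ = 1 ∧ ‖s u‖ ≤ ‖s v‖ := by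
  obtain ⟨w, huw, hw⟩ := exists_inner_eq_zero_and_norm_eq hE u
    (Real.sqrt_nonneg (1 - ‖u‖ ^ 2))
  have hu2 : 0 ≤ 1 - ‖u‖ ^ 2 := by nlinarith [norm_nonneg u]
  have hw2 : ‖w‖ ^ 2 = 1 - ‖u‖ ^ 2 := by rw [hw, Real.sq_sqrt hu2]
  have hdisk (z : ℂ) : ‖u + z • w‖ ^ 2 = ‖u‖ ^ 2 + ‖z‖ ^ 2 * (1 - ‖u‖ ^ 2) := by
    rw [norm_add_smul_sq_of_inner_eq_zero huw, hw2]
  obtain ⟨z, hz, hle⟩ := Complex.exists_norm_eq_one_norm_le_norm_add_smul hs fun z hz => by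
    have hz2 : ‖z‖ ^ 2 ≤ 1 := by nlinarith [norm_nonneg z]
    have := hdisk z
    constructor <;> nlinarith [mul_le_mul_of_nonneg_right hz2 hu2, norm_nonneg u,
      norm_nonneg (u + z • w)]
  refine ⟨u + z • w, ?_, hle⟩
  have := hdisk z
  rw [hz] at this
  nlinarith [norm_nonneg (u + z • w)]

theorem stmt_6_general (n : ℕ) (hn : 2 ≤ n) (r : ℝ) (hr1 : r < 1)
    {F : Type*} [NormedAddCommGroup F] [NormedSpace ℂ F]
    (U : Set (EuclideanSpace ℂ (Fin n)))
    (hΩU : {u : EuclideanSpace ℂ (Fin n) | r ≤ ‖u‖ ∧ ‖u‖ ≤ 1} ⊆ U)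
    (s : EuclideanSpace ℂ (Fin n) → F) (hs : DifferentiableOn ℂ s U) :
    sSup ((fun u => Real.exp (‖u‖ ^ 2 / 4) * ‖s u‖) ''
        {u : EuclideanSpace ℂ (Fin n) | r ≤ ‖u‖ ∧ ‖u‖ ≤ 1}) =
      sSup ((fun u => Real.exp (‖u‖ ^ 2 / 4) * ‖s u‖) ''
        {u : EuclideanSpace ℂ (Fin n) | ‖u‖ = 1}) := by
  apply csSup_eq_csSup_of_forall_exists_le
  · rintro _ ⟨u, ⟨hru, hu⟩, rfl⟩
    obtain ⟨v, hv, hsv⟩ := exists_norm_eq_one_and_norm_le_of_differentiableOn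
      (by rwa [finrank_euclideanSpace_fin]) hu
      (hs.mono fun v hv => hΩU ⟨hru.trans hv.1, hv.2⟩)
    refine ⟨_, ⟨v, hv, rfl⟩, ?_⟩
    dsimp only
    rw [hv]
    gcongr
  · rintro _ ⟨v, hv, rfl⟩
    exact ⟨_, ⟨v, ⟨hv ▸ hr1.le, hv.le⟩, rfl⟩, le_rfl⟩

theorem stmt_6 (n : ℕ) (hn : 2 ≤ n) (r : ℝ) (hr0 : 0 < r) (hr1 : r < 1)
    {F : Type*} [NormedAddCommGroup F] [NormedSpace ℂ F] [CompleteSpace F]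
    (U : Set (EuclideanSpace ℂ (Fin n))) (hU : IsOpen U)
    (hΩU : {u : EuclideanSpace ℂ (Fin n) | r ≤ ‖u‖ ∧ ‖u‖ ≤ 1} ⊆ U)
    (s : EuclideanSpace ℂ (Fin n) → F) (hs : DifferentiableOn ℂ s U) :
    sSup ((fun u => Real.exp (‖u‖ ^ 2 / 4) * ‖s u‖) ''
        {u : EuclideanSpace ℂ (Fin n) | r ≤ ‖u‖ ∧ ‖u‖ ≤ 1}) =
      sSup ((fun u => Real.exp (‖u‖ ^ 2 / 4) * ‖s u‖) ''
        {u : EuclideanSpace ℂ (Fin n) | ‖u‖ = 1}) :=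
  stmt_6_general n hn r hr1 U hΩU s hs
end

section
/- Let n ≥ 2 and 0 < r < 1, and let f : Ω_{r,1} → ℝ be a continuous function with the following circle-maximum property: for every u ∈ Ω_{r,1}, every v ∈ ℂⁿ and every ρ > 0 such that the closed disk {u + t·v : |t| ≤ ρ} is contained in Ω_{r,1}, one has f(u) ≤ sup_{|t| = ρ} f(u + t·v). Then sup_{u ∈ Ω_{r,1}} f(u) = sup_{u ∈ S} f(u). -/
/-!
Take `u` in the annulus with `‖u‖ < 1`. As `n ≥ 2` there is a unit vector `w` orthogonal to `u`,
and by Pythagoras `‖u + t • w‖² = ‖u‖² + ‖t‖²`. Hence the disk `{u + t • w : ‖t‖ ≤ √(1 - ‖u‖²)}`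
lies in the annulus and its boundary circle lies on the unit sphere, so the circle-maximum
property bounds `f u` by the supremum of `f` on the sphere.
-/

open Module Set

section InnerProductSpace

variable {𝕜 E : Type*} [RCLike 𝕜] [NormedAddCommGroup E] [InnerProductSpace 𝕜 E]

theorem exists_norm_eq_one_inner_eq_zero [FiniteDimensional 𝕜 E] (hE : 2 ≤ finrank 𝕜 E) (u : E) :
    ∃ w : E, ‖w‖ = 1 ∧ inner 𝕜 u w = 0 := by
  have hline : finrank 𝕜 (𝕜 ∙ u) ≤ 1 := by
    simpa using finrank_span_le_card (R := 𝕜) ({u} : Set E)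
  have hcompl : (𝕜 ∙ u)ᗮ ≠ ⊥ := by
    intro h
    have := (𝕜 ∙ u).finrank_add_finrank_orthogonal
    rw [h, finrank_bot] at this
    omega
  obtain ⟨v, hv, hv0⟩ := Submodule.exists_mem_ne_zero_of_ne_bot hcompl
  refine ⟨(‖v‖⁻¹ : 𝕜) • v, norm_smul_inv_norm hv0, ?_⟩
  rw [inner_smul_right, Submodule.mem_orthogonal_singleton_iff_inner_right.1 hv, mul_zero]

theorem norm_add_smul_sq_of_inner_eq_zero_s10 {u w : E} (hw : ‖w‖ = 1) (huw : inner 𝕜 u w = 0)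
    (t : 𝕜) : ‖u + t • w‖ ^ 2 = ‖u‖ ^ 2 + ‖t‖ ^ 2 := by
  have h : inner 𝕜 u (t • w) = 0 := by rw [inner_smul_right, huw, mul_zero]
  simp only [sq, norm_add_sq_eq_norm_sq_add_norm_sq_of_inner_eq_zero u (t • w) h, norm_smul, hw,
    mul_one]

theorem exists_disk_boundary_subset_sphere [FiniteDimensional 𝕜 E] (hE : 2 ≤ finrank 𝕜 E) {u : E}
    (hu : ‖u‖ < 1) : ∃ w : E, ∃ ρ > 0,
      (∀ t : 𝕜, ‖t‖ ≤ ρ → ‖u‖ ≤ ‖u + t • w‖ ∧ ‖u + t • w‖ ≤ 1) ∧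
      ∀ t : 𝕜, ‖t‖ = ρ → ‖u + t • w‖ = 1 := by
  obtain ⟨w, hw, huw⟩ := exists_norm_eq_one_inner_eq_zero hE u
  have hpyth := norm_add_smul_sq_of_inner_eq_zero_s10 hw huw
  have hρ : 0 < 1 - ‖u‖ ^ 2 := sub_pos.2 (pow_lt_one₀ (norm_nonneg u) hu two_ne_zero)
  refine ⟨w, √(1 - ‖u‖ ^ 2), Real.sqrt_pos.2 hρ, fun t ht => ?_, fun t ht => ?_⟩
  · have ht' : ‖t‖ ^ 2 ≤ 1 - ‖u‖ ^ 2 := by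
      simpa [Real.sq_sqrt hρ.le] using pow_le_pow_left₀ (norm_nonneg t) ht 2
    constructor
    · rw [← sq_le_sq₀ (norm_nonneg _) (norm_nonneg _), hpyth]
      exact le_add_of_nonneg_right (sq_nonneg _)
    · rw [← sq_le_sq₀ (norm_nonneg _) zero_le_one, hpyth]
      linarith
  · rw [← sq_eq_sq₀ (norm_nonneg _) zero_le_one, hpyth, ht, Real.sq_sqrt hρ.le]
    ring

end InnerProductSpace

theorem isCompact_setOf_le_norm_le {E : Type*} [NormedAddCommGroup E] [ProperSpace E] (r R : ℝ) :
    IsCompact {u : E | r ≤ ‖u‖ ∧ ‖u‖ ≤ R} :=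
  (isCompact_closedBall (0 : E) R).of_isClosed_subset
    ((isClosed_le continuous_const continuous_norm).inter
      (isClosed_le continuous_norm continuous_const))
    fun _ hu => mem_closedBall_zero_iff.2 hu.2

theorem csSup_image_eq_of_forall_le_csSup {α β : Type*} [ConditionallyCompleteLattice β]
    {f : α → β} {A S : Set α} (hSA : S ⊆ A) (hS : S.Nonempty) (hA : BddAbove (f '' A))
    (h : ∀ u ∈ A, f u ≤ sSup (f '' S)) : sSup (f '' A) = sSup (f '' S) :=
  le_antisymm (csSup_le ((hS.mono hSA).image f) (forall_mem_image.2 h))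
    (csSup_le_csSup hA (hS.image f) (image_mono hSA))

theorem stmt_10_general (n : ℕ) (hn : 2 ≤ n) (r : ℝ) (hr1 : r < 1)
    (f : EuclideanSpace ℂ (Fin n) → ℝ)
    (hcont : ContinuousOn f {u : EuclideanSpace ℂ (Fin n) | r ≤ ‖u‖ ∧ ‖u‖ ≤ 1})
    -- circle-maximum property on closed disks contained in the annulus
    (hmax : ∀ u : EuclideanSpace ℂ (Fin n), r ≤ ‖u‖ → ‖u‖ ≤ 1 →
      ∀ v : EuclideanSpace ℂ (Fin n), ∀ ρ : ℝ, 0 < ρ →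
        (∀ t : ℂ, ‖t‖ ≤ ρ → r ≤ ‖u + t • v‖ ∧ ‖u + t • v‖ ≤ 1) →
        f u ≤ sSup ((fun t : ℂ => f (u + t • v)) '' {t : ℂ | ‖t‖ = ρ})) :
    sSup (f '' {u : EuclideanSpace ℂ (Fin n) | r ≤ ‖u‖ ∧ ‖u‖ ≤ 1}) =
      sSup (f '' {u : EuclideanSpace ℂ (Fin n) | ‖u‖ = 1}) := by
  have hE : 2 ≤ finrank ℂ (EuclideanSpace ℂ (Fin n)) := by simpa using hn
  have : Nontrivial (EuclideanSpace ℂ (Fin n)) := nontrivial_of_finrank_pos (R := ℂ) (by omega)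
  have hSA : {u : EuclideanSpace ℂ (Fin n) | ‖u‖ = 1} ⊆ {u | r ≤ ‖u‖ ∧ ‖u‖ ≤ 1} :=
    fun u hu => ⟨hu ▸ hr1.le, hu.le⟩
  have hbdd := ((isCompact_setOf_le_norm_le r 1).image_of_continuousOn hcont).bddAbove
  have hbddS := hbdd.mono (image_mono hSA)
  refine csSup_image_eq_of_forall_le_csSup hSA ?_ hbdd fun u hu => ?_
  · exact (NormedSpace.sphere_nonempty.2 zero_le_one).mono fun u => mem_sphere_zero_iff_norm.1
  rcases hu.2.eq_or_lt with hu1 | hu1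
  · exact le_csSup hbddS ⟨u, hu1, rfl⟩
  obtain ⟨w, ρ, hρ, hdisk, hcircle⟩ := exists_disk_boundary_subset_sphere hE hu1
  calc f u ≤ sSup ((fun t : ℂ => f (u + t • w)) '' {t : ℂ | ‖t‖ = ρ}) :=
        hmax u hu.1 hu.2 w ρ hρ fun t ht => ⟨hu.1.trans (hdisk t ht).1, (hdisk t ht).2⟩
    _ ≤ sSup (f '' {u | ‖u‖ = 1}) :=
        csSup_le_csSup hbddS (Nonempty.image _ ⟨ρ, by simp [hρ.le]⟩)
          (by rintro _ ⟨t, ht, rfl⟩; exact ⟨_, hcircle t ht, rfl⟩)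

theorem stmt_10 (n : ℕ) (hn : 2 ≤ n) (r : ℝ) (hr0 : 0 < r) (hr1 : r < 1)
    (f : EuclideanSpace ℂ (Fin n) → ℝ)
    (hcont : ContinuousOn f {u : EuclideanSpace ℂ (Fin n) | r ≤ ‖u‖ ∧ ‖u‖ ≤ 1})
    -- circle-maximum property on closed disks contained in the annulus
    (hmax : ∀ u : EuclideanSpace ℂ (Fin n), r ≤ ‖u‖ → ‖u‖ ≤ 1 →
      ∀ v : EuclideanSpace ℂ (Fin n), ∀ ρ : ℝ, 0 < ρ →
        (∀ t : ℂ, ‖t‖ ≤ ρ → r ≤ ‖u + t • v‖ ∧ ‖u + t • v‖ ≤ 1) →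
        f u ≤ sSup ((fun t : ℂ => f (u + t • v)) '' {t : ℂ | ‖t‖ = ρ})) :
    sSup (f '' {u : EuclideanSpace ℂ (Fin n) | r ≤ ‖u‖ ∧ ‖u‖ ≤ 1}) =
      sSup (f '' {u : EuclideanSpace ℂ (Fin n) | ‖u‖ = 1}) :=
  stmt_10_general n hn r hr1 f hcont hmax
end
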